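/- arXiv:2210.04370 — 2 statements merged into one kernel-verified Lean document; each statement's English description precedes it below -/
import Mathlib

section
/- Let d > 0 and K > 0. Then Re(1/(-ω² + i d ω)) ≥ -1/(2K) holds for all real ω ≠ 0 if and only if d ≥ √(2K). -/
open Filter Topology

/-
On the imaginary axis, 1/(-ω² + i d ω) = -(ω + i d)/(ω (ω² + d²)) has real part -1/(ω² + d²),
so the criterion reads 2K ≤ ω² + d² for all ω ≠ 0. Letting ω → 0 this is exactly 2K ≤ d²,
i.e. √(2K) ≤ d.
-/

lemma re_one_div_neg_sq_add_I_mul (d ω : ℝ) (hω : ω ≠ 0) :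
    ((1 : ℂ) / (-(ω : ℂ) ^ 2 + Complex.I * d * ω)).re = -1 / (ω ^ 2 + d ^ 2) := by
  set z : ℂ := -(ω : ℂ) ^ 2 + Complex.I * d * ω
  have hre : z.re = -ω ^ 2 := by simp [z, pow_two]
  have him : z.im = d * ω := by simp [z, pow_two]
  rw [one_div, Complex.inv_re, Complex.normSq_apply, hre, him]
  field_simp

lemma forall_ne_zero_le_sq_add_iff {b c : ℝ} : (∀ ω : ℝ, ω ≠ 0 → b ≤ ω ^ 2 + c) ↔ b ≤ c := by
  refine ⟨fun h => ?_, fun h ω _ => h.trans (le_add_of_nonneg_left (sq_nonneg ω))⟩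
  have hlim : Tendsto (fun ω : ℝ => ω ^ 2 + c) (𝓝[≠] 0) (𝓝 (0 ^ 2 + c)) :=
    ((continuous_pow 2).add continuous_const).continuousAt.tendsto.mono_left nhdsWithin_le_nhds
  simpa using ge_of_tendsto hlim (eventually_nhdsWithin_of_forall h)

theorem stmt_5 (d K : ℝ) (hd : 0 < d) (hK : 0 < K) :
    (∀ ω : ℝ, ω ≠ 0 →
        ((1 : ℂ) / (-(ω : ℂ) ^ 2 + Complex.I * d * ω)).re ≥ -1 / (2 * K)) ↔
      d ≥ Real.sqrt (2 * K) := by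
  calc (∀ ω : ℝ, ω ≠ 0 → ((1 : ℂ) / (-(ω : ℂ) ^ 2 + Complex.I * d * ω)).re ≥ -1 / (2 * K))
      ↔ ∀ ω : ℝ, ω ≠ 0 → 2 * K ≤ ω ^ 2 + d ^ 2 := by
        refine forall₂_congr fun ω hω => ?_
        rw [re_one_div_neg_sq_add_I_mul d ω hω, ge_iff_le, neg_div, neg_div, neg_le_neg_iff,
          one_div_le_one_div (by positivity) (by positivity)]
    _ ↔ 2 * K ≤ d ^ 2 := forall_ne_zero_le_sq_add_iff
    _ ↔ d ≥ Real.sqrt (2 * K) := (Real.sqrt_le_left hd.le).symm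
end

section
/- Let d > 0, K > 0, and consider the planar subsystem with T(s) = 1/(s² + ds). If d < √(2K), then there exists a real frequency ω ≠ 0 such that Re(T(iω)) < -1/(2K), and consequently |K·T(iω)/(1 + K·T(iω))| > 1. -/
theorem stmt_18 (d K : ℝ) (hd : 0 < d) (hK : 0 < K) (hlt : d < Real.sqrt (2 * K)) :
    ∃ ω : ℝ, ω ≠ 0 ∧
      ((1 : ℂ) / (-(ω : ℂ) ^ 2 + Complex.I * d * ω)).re < -1 / (2 * K) ∧
      ‖((K : ℂ) * ((1 : ℂ) / (-(ω : ℂ) ^ 2 + Complex.I * d * ω)) /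
          (1 + (K : ℂ) * ((1 : ℂ) / (-(ω : ℂ) ^ 2 + Complex.I * d * ω))))‖ > 1 := by
  have h2K : (0:ℝ) < 2*K := by linarith
  have hd2 : d^2 < 2*K := (Real.lt_sqrt hd.le).mp hlt
  set ω := Real.sqrt ((2*K - d^2)/2) with hωdef
  have hωsq : ω^2 = (2*K - d^2)/2 := Real.sq_sqrt (by linarith)
  have hωpos : 0 < ω := Real.sqrt_pos.mpr (by linarith)
  set D : ℂ := -(ω : ℂ) ^ 2 + Complex.I * d * ω with hD
  have hDre : D.re = -ω^2 := by simp [hD, ← Complex.ofReal_pow]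
  have hDim : D.im = d*ω := by simp [hD, ← Complex.ofReal_pow]
  have hns : Complex.normSq D = ω^2*(ω^2+d^2) := by
    rw [Complex.normSq_apply, hDre, hDim]; ring
  have hnspos : 0 < Complex.normSq D := by
    rw [hns]; positivity
  have hre : ((1:ℂ)/D).re = -1/(ω^2+d^2) := by
    rw [one_div, Complex.inv_re, hDre, hns]
    field_simp
  have him : ((1:ℂ)/D).im = -(d*ω)/(ω^2*(ω^2+d^2)) := by
    rw [one_div, Complex.inv_im, hDim, hns]
  have hsum : ω^2 + d^2 < 2*K := by rw [hωsq]; linarith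
  have hsumpos : 0 < ω^2 + d^2 := by positivity
  have hrelt : ((1:ℂ)/D).re < -1/(2*K) := by
    rw [hre, div_lt_div_iff₀ hsumpos h2K]
    nlinarith
  refine ⟨ω, hωpos.ne', hrelt, ?_⟩
  set z : ℂ := (K:ℂ) * ((1:ℂ)/D) with hz
  have hzre : z.re < -1/2 := by
    have : z.re = K * ((1:ℂ)/D).re := by simp [hz]
    rw [this, hre]
    rw [show -1/2 = K * (-1/(2*K)) by field_simp]
    exact (mul_lt_mul_iff_right₀ hK).mpr (by rw [div_lt_div_iff₀ hsumpos h2K]; nlinarith)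
  have hzim : z.im ≠ 0 := by
    have : z.im = K * ((1:ℂ)/D).im := by simp [hz]
    rw [this, him]
    have : 0 < d*ω := by positivity
    have h2 : 0 < ω^2*(ω^2+d^2) := by positivity
    have := div_pos this h2
    intro h; rw [neg_div] at h; nlinarith
  have h1z : (1 + z) ≠ 0 := by
    intro h
    have : (1+z).im = 0 := by rw [h]; simp
    simp [Complex.add_im] at this
    exact hzim this
  have habs : ‖1+z‖ < ‖z‖ := by
    have h1 : Complex.normSq (1+z) < Complex.normSq z := by
      have he : Complex.normSq (1+z) = 1 + 2*z.re + Complex.normSq z := by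
        simp [Complex.normSq_apply, Complex.add_re, Complex.add_im]; ring
      rw [he]; nlinarith
    have := Real.sqrt_lt_sqrt (Complex.normSq_nonneg _) h1
    simpa [Complex.norm_def] using this
  rw [norm_div, gt_iff_lt, lt_div_iff₀ (norm_pos_iff.mpr h1z)]
  simpa using habs
end
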